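/- Let $F$ be an imaginary quadratic field with ring of integers $\mathcal{O}$, $\mathfrak{b}$ a fractional ideal, and $H(\mathfrak{b}) = \{\begin{pmatrix}a&b\\c&d\end{pmatrix} \in \mathrm{SL}_2(F) : a,d\in\mathcal{O},\ b\in\mathfrak{b},\ c\in\mathfrak{b}^{-1}\}$. For $(x_1,x_2), (y_1,y_2) \in F\times F$, both nonzero, the following are equivalent: (1) $x_1\mathfrak{b} + x_2\mathcal{O} = y_1\mathfrak{b} + y_2\mathcal{O}$ as fractional ideals; (2) there exists $\sigma \in H(\mathfrak{b})$ such that $(x_1,x_2) = (y_1,y_2)\sigma$. -/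

import Mathlib

/-!
If `X = x₁𝔟 + x₂𝒪` is nonzero, hence invertible, then `1 ∈ X⁻¹X = x₁(X⁻¹𝔟) + x₂X⁻¹` gives
`p ∈ X⁻¹𝔟` and `q ∈ X⁻¹` with `x₁p + x₂q = 1`, i.e. a matrix `A_x = (x₁ x₂; -q p)` of
determinant one with first row `(x₁, x₂)`. When `(y₁, y₂)` spans the same `X`, the matrix
`σ = A_y⁻¹ A_x` satisfies `(y₁, y₂)σ = (x₁, x₂)`, and each entry of `σ` is a sum of products
whose ideals multiply to `𝒪`, `𝔟` or `𝔟⁻¹` as required. Conversely `σ⁻¹ = adj σ` has the same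
shape as `σ`, so the two ideals contain each other.
-/

open NumberField FractionalIdeal
open scoped nonZeroDivisors

namespace FractionalIdeal

section General

variable {R P : Type*} [CommRing R] {S : Submonoid R} [CommRing P] [Algebra R P]
variable {I J L : FractionalIdeal S P} {u v : P}

theorem add_mem' (hu : u ∈ I) (hv : v ∈ I) : u + v ∈ I := (I : Submodule R P).add_mem hu hv

theorem sub_mem' (hu : u ∈ I) (hv : v ∈ I) : u - v ∈ I := (I : Submodule R P).sub_mem hu hv

theorem neg_mem' (hu : u ∈ I) : -u ∈ I := (I : Submodule R P).neg_mem hu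

theorem mul_mem_of_mul_eq (h : I * J = L) (hu : u ∈ I) (hv : v ∈ J) : u * v ∈ L :=
  h ▸ mul_mem_mul hu hv

end General

section SpanPair

variable {R K : Type*} [CommRing R] [Field K] [Algebra R K] [IsFractionRing R K]

def spanPair (𝔟 : FractionalIdeal R⁰ K) (x₁ x₂ : K) : FractionalIdeal R⁰ K :=
  spanSingleton R⁰ x₁ * 𝔟 + spanSingleton R⁰ x₂

variable {𝔟 : FractionalIdeal R⁰ K} {x₁ x₂ y₁ y₂ : K}

theorem spanSingleton_mul_le_spanPair : spanSingleton R⁰ x₁ * 𝔟 ≤ spanPair 𝔟 x₁ x₂ :=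
  le_sup_left

theorem spanSingleton_le_spanPair : spanSingleton R⁰ x₂ ≤ spanPair 𝔟 x₁ x₂ :=
  le_sup_right

theorem mem_spanPair : x₂ ∈ spanPair 𝔟 x₁ x₂ :=
  spanSingleton_le_iff_mem.mp spanSingleton_le_spanPair

theorem mul_spanPair (I : FractionalIdeal R⁰ K) :
    I * spanPair 𝔟 x₁ x₂ = spanSingleton R⁰ x₁ * (I * 𝔟) + spanSingleton R⁰ x₂ * I := by
  rw [spanPair]
  ring

theorem mul_mem_spanSingleton_of_mem_one {a : K} (ha : a ∈ (1 : FractionalIdeal R⁰ K)) (y : K) :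
    y * a ∈ spanSingleton R⁰ y :=
  mul_mem_of_mul_eq (mul_one _) (mem_spanSingleton_self R⁰ y) ha

section IsDomain

variable [IsDomain R]

theorem inv_mul_le_one (𝔟 : FractionalIdeal R⁰ K) : 𝔟⁻¹ * 𝔟 ≤ 1 :=
  mul_comm 𝔟 𝔟⁻¹ ▸ mul_one_div_le_one

theorem spanPair_le_spanPair {a b c d : K} (ha : a ∈ (1 : FractionalIdeal R⁰ K)) (hb : b ∈ 𝔟)
    (hc : c ∈ 𝔟⁻¹) (hd : d ∈ (1 : FractionalIdeal R⁰ K))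
    (h₁ : x₁ = y₁ * a + y₂ * c) (h₂ : x₂ = y₁ * b + y₂ * d) :
    spanPair 𝔟 x₁ x₂ ≤ spanPair 𝔟 y₁ y₂ := by
  refine sup_le (fun z hz ↦ ?_) (spanSingleton_le_iff_mem.mpr ?_)
  · obtain ⟨β, hβ, rfl⟩ := mem_singleton_mul.mp hz
    have haβ : a * β ∈ 𝔟 := mul_mem_of_mul_eq (one_mul 𝔟) ha hβ
    have hcβ : c * β ∈ (1 : FractionalIdeal R⁰ K) := inv_mul_le_one 𝔟 (mul_mem_mul hc hβ)
    rw [h₁, add_mul, mul_assoc, mul_assoc]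
    exact (mem_add _ _ _).mpr ⟨_, mul_mem_mul (mem_spanSingleton_self R⁰ y₁) haβ, _,
      mul_mem_spanSingleton_of_mem_one hcβ y₂, rfl⟩
  · rw [h₂]
    exact (mem_add _ _ _).mpr ⟨_, mul_mem_mul (mem_spanSingleton_self R⁰ y₁) hb, _,
      mul_mem_spanSingleton_of_mem_one hd y₂, rfl⟩

theorem spanPair_eq_of_det_eq_one {σ : Matrix (Fin 2) (Fin 2) K}
    (h₀₀ : σ 0 0 ∈ (1 : FractionalIdeal R⁰ K)) (h₁₁ : σ 1 1 ∈ (1 : FractionalIdeal R⁰ K))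
    (h₀₁ : σ 0 1 ∈ 𝔟) (h₁₀ : σ 1 0 ∈ 𝔟⁻¹) (hdet : σ.det = 1)
    (h₁ : x₁ = y₁ * σ 0 0 + y₂ * σ 1 0) (h₂ : x₂ = y₁ * σ 0 1 + y₂ * σ 1 1) :
    spanPair 𝔟 x₁ x₂ = spanPair 𝔟 y₁ y₂ := by
  rw [Matrix.det_fin_two] at hdet
  refine le_antisymm (spanPair_le_spanPair h₀₀ h₀₁ h₁₀ h₁₁ h₁ h₂) ?_
  refine spanPair_le_spanPair h₁₁ (neg_mem' h₀₁) (neg_mem' h₁₀) h₀₀ ?_ ?_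
  · linear_combination (-σ 1 1) * h₁ + σ 1 0 * h₂ - y₁ * hdet
  · linear_combination σ 0 1 * h₁ - σ 0 0 * h₂ - y₂ * hdet

end IsDomain

section IsDedekindDomain

variable [IsDedekindDomain R]

theorem spanPair_ne_zero (h𝔟 : 𝔟 ≠ 0) (hx : ¬(x₁ = 0 ∧ x₂ = 0)) : spanPair 𝔟 x₁ x₂ ≠ 0 := by
  intro h
  rcases not_and_or.mp hx with hx₁ | hx₂
  · exact mul_ne_zero (spanSingleton_ne_zero_iff.mpr hx₁) h𝔟
      (le_zero_iff.mp (spanSingleton_mul_le_spanPair.trans h.le))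
  · exact spanSingleton_ne_zero_iff.mpr hx₂
      (le_zero_iff.mp (spanSingleton_le_spanPair.trans h.le))

theorem mem_spanPair_mul_inv (h𝔟 : 𝔟 ≠ 0) : x₁ ∈ spanPair 𝔟 x₁ x₂ * 𝔟⁻¹ := by
  rw [← spanSingleton_le_iff_mem]
  calc spanSingleton R⁰ x₁ = spanSingleton R⁰ x₁ * 𝔟 * 𝔟⁻¹ := by field_simp
    _ ≤ spanPair 𝔟 x₁ x₂ * 𝔟⁻¹ := by gcongr; exact spanSingleton_mul_le_spanPair

theorem exists_mul_add_mul_eq_one {X : FractionalIdeal R⁰ K} (hX : X ≠ 0)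
    (hx : spanPair 𝔟 x₁ x₂ = X) : ∃ p ∈ X⁻¹ * 𝔟, ∃ q ∈ X⁻¹, x₁ * p + x₂ * q = 1 := by
  have h := one_mem_one (S := R⁰) (P := K)
  rw [← inv_mul_cancel₀ hX, ← hx, mul_spanPair, hx, mem_add] at h
  obtain ⟨u, hu, v, hv, huv⟩ := h
  obtain ⟨p, hp, rfl⟩ := mem_singleton_mul.mp hu
  obtain ⟨q, hq, rfl⟩ := mem_singleton_mul.mp hv
  exact ⟨p, hp, q, hq, huv⟩

theorem exists_matrix_of_spanPair_eq {X : FractionalIdeal R⁰ K} (h𝔟 : 𝔟 ≠ 0) (hX : X ≠ 0)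
    (hx : spanPair 𝔟 x₁ x₂ = X) (hy : spanPair 𝔟 y₁ y₂ = X) :
    ∃ σ : Matrix (Fin 2) (Fin 2) K,
      σ 0 0 ∈ (1 : FractionalIdeal R⁰ K) ∧ σ 1 1 ∈ (1 : FractionalIdeal R⁰ K) ∧
      σ 0 1 ∈ 𝔟 ∧ σ 1 0 ∈ 𝔟⁻¹ ∧ σ.det = 1 ∧
      x₁ = y₁ * σ 0 0 + y₂ * σ 1 0 ∧ x₂ = y₁ * σ 0 1 + y₂ * σ 1 1 := by
  obtain ⟨p, hp, q, hq, hpq⟩ := exists_mul_add_mul_eq_one hX hx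
  obtain ⟨r, hr, s, hs, hrs⟩ := exists_mul_add_mul_eq_one hX hy
  have hx₁ : x₁ ∈ X * 𝔟⁻¹ := hx ▸ mem_spanPair_mul_inv h𝔟
  have hy₁ : y₁ ∈ X * 𝔟⁻¹ := hy ▸ mem_spanPair_mul_inv h𝔟
  have hx₂ : x₂ ∈ X := hx ▸ mem_spanPair
  have hy₂ : y₂ ∈ X := hy ▸ mem_spanPair
  -- `σ = A_y⁻¹ A_x` with `A_y = (y₁ y₂; -s r)`
  refine ⟨!![r * x₁ + y₂ * q, r * x₂ - y₂ * p; s * x₁ - y₁ * q, s * x₂ + y₁ * p],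
    ?_, ?_, ?_, ?_, ?_, ?_, ?_⟩
  · exact add_mem' (mul_mem_of_mul_eq (by field_simp) hr hx₁)
      (mul_mem_of_mul_eq (by field_simp) hy₂ hq)
  · exact add_mem' (mul_mem_of_mul_eq (by field_simp) hs hx₂)
      (mul_mem_of_mul_eq (by field_simp) hy₁ hp)
  · exact sub_mem' (mul_mem_of_mul_eq (by field_simp) hr hx₂)
      (mul_mem_of_mul_eq (by field_simp) hy₂ hp)
  · exact sub_mem' (mul_mem_of_mul_eq (by field_simp) hs hx₁)
      (mul_mem_of_mul_eq (by field_simp) hy₁ hq)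
  · rw [Matrix.det_fin_two_of]
    linear_combination (y₁ * r + y₂ * s) * hpq + hrs
  · simp only [Matrix.of_apply, Matrix.cons_val', Matrix.cons_val_zero, Matrix.cons_val_one]
    linear_combination (-x₁) * hrs
  · simp only [Matrix.of_apply, Matrix.cons_val', Matrix.cons_val_zero, Matrix.cons_val_one]
    linear_combination (-x₂) * hrs

theorem spanPair_eq_spanPair_iff (h𝔟 : 𝔟 ≠ 0) (hx : ¬(x₁ = 0 ∧ x₂ = 0)) :
    spanPair 𝔟 x₁ x₂ = spanPair 𝔟 y₁ y₂ ↔ ∃ σ : Matrix (Fin 2) (Fin 2) K,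
      σ 0 0 ∈ (1 : FractionalIdeal R⁰ K) ∧ σ 1 1 ∈ (1 : FractionalIdeal R⁰ K) ∧
      σ 0 1 ∈ 𝔟 ∧ σ 1 0 ∈ 𝔟⁻¹ ∧ σ.det = 1 ∧
      x₁ = y₁ * σ 0 0 + y₂ * σ 1 0 ∧ x₂ = y₁ * σ 0 1 + y₂ * σ 1 1 := by
  refine ⟨fun h ↦ exists_matrix_of_spanPair_eq h𝔟 (spanPair_ne_zero h𝔟 hx) rfl h.symm, ?_⟩
  rintro ⟨σ, h₀₀, h₁₁, h₀₁, h₁₀, hdet, h₁, h₂⟩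
  exact spanPair_eq_of_det_eq_one h₀₀ h₁₁ h₀₁ h₁₀ hdet h₁ h₂

end IsDedekindDomain

end SpanPair

end FractionalIdeal

theorem span_eq_iff_related_by_H_general
    (F : Type*) [Field F] [NumberField F]
    (b : FractionalIdeal (nonZeroDivisors (𝓞 F)) F) (hb : b ≠ 0)
    (x₁ x₂ y₁ y₂ : F) (hx : ¬(x₁ = 0 ∧ x₂ = 0)) :
    (spanSingleton (nonZeroDivisors (𝓞 F)) x₁ * b + spanSingleton (nonZeroDivisors (𝓞 F)) x₂
      = spanSingleton (nonZeroDivisors (𝓞 F)) y₁ * b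
          + spanSingleton (nonZeroDivisors (𝓞 F)) y₂)
    ↔ ∃ σ : Matrix (Fin 2) (Fin 2) F,
        σ 0 0 ∈ (1 : FractionalIdeal (nonZeroDivisors (𝓞 F)) F) ∧
        σ 1 1 ∈ (1 : FractionalIdeal (nonZeroDivisors (𝓞 F)) F) ∧
        σ 0 1 ∈ b ∧ σ 1 0 ∈ b⁻¹ ∧ σ.det = 1 ∧
        x₁ = y₁ * σ 0 0 + y₂ * σ 1 0 ∧ x₂ = y₁ * σ 0 1 + y₂ * σ 1 1 :=
  spanPair_eq_spanPair_iff hb hx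

/-- Let `F` be an imaginary quadratic field, `𝔟` a fractional ideal and
`H(𝔟) = {(a b; c d) ∈ SL₂(F) : a,d ∈ 𝒪, b ∈ 𝔟, c ∈ 𝔟⁻¹}`.  For nonzero row vectors
`(x₁,x₂), (y₁,y₂) ∈ F²` the following are equivalent: `x₁𝔟 + x₂𝒪 = y₁𝔟 + y₂𝒪` as
fractional ideals, iff `(x₁,x₂) = (y₁,y₂)σ` for some `σ ∈ H(𝔟)`. -/
theorem span_eq_iff_related_by_H
    (F : Type*) [Field F] [NumberField F]
    (h2 : Module.finrank ℚ F = 2) (him : IsEmpty (F →+* ℝ))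
    (b : FractionalIdeal (nonZeroDivisors (𝓞 F)) F) (hb : b ≠ 0)
    (x₁ x₂ y₁ y₂ : F) (hx : ¬(x₁ = 0 ∧ x₂ = 0)) (hy : ¬(y₁ = 0 ∧ y₂ = 0)) :
    (spanSingleton (nonZeroDivisors (𝓞 F)) x₁ * b + spanSingleton (nonZeroDivisors (𝓞 F)) x₂
      = spanSingleton (nonZeroDivisors (𝓞 F)) y₁ * b
          + spanSingleton (nonZeroDivisors (𝓞 F)) y₂)
    ↔ ∃ σ : Matrix (Fin 2) (Fin 2) F,
        σ 0 0 ∈ (1 : FractionalIdeal (nonZeroDivisors (𝓞 F)) F) ∧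
        σ 1 1 ∈ (1 : FractionalIdeal (nonZeroDivisors (𝓞 F)) F) ∧
        σ 0 1 ∈ b ∧ σ 1 0 ∈ b⁻¹ ∧ σ.det = 1 ∧
        x₁ = y₁ * σ 0 0 + y₂ * σ 1 0 ∧ x₂ = y₁ * σ 0 1 + y₂ * σ 1 1 :=
  span_eq_iff_related_by_H_general F b hb x₁ x₂ y₁ y₂ hx
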